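/- Let d ≥ 3, γ ∈ (−2, 0], and f ≥ 0 with ∫ f dv = 1 and ∫ f|v|² dv = d. Then there is C = C(d, γ, mass, second moment) such that for every cube Q with side length r ≤ 1 and center v₀, the average of h_{f,γ}(v) = c(d,γ)∫ f(w)|v−w|^γ dw over Q satisfies (1/|Q|)∫_Q h_{f,γ} dv ≤ C·⟨v₀⟩^γ·|Q|^{γ/d}. -/

import Mathlib

/-!
By Tonelli, the cube average of `∫ f(w) ‖v - w‖^γ dw` is `∫ f(w) ⨍_Q ‖v - w‖^γ dv dw`. The cube
lies between the balls of radii `r/2` and `√d r/2` about `v₀`, and on a ball `B(v₀, ρ)` the average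
of `‖v - w‖^γ` is `≲ max(ρ, ‖v₀ - w‖)^γ`: far from `w` the integrand is bounded pointwise, while
near `w` the ball lies in `B(w, 4ρ)`, where scaling and the local integrability of `‖x‖^γ` (as
`d + γ > 0`) give `∫_{B(w, 4ρ)} ‖v - w‖^γ dv ≈ ρ^(d+γ)`. Finally, for `r ≤ 1` the Peetre-type
inequality `r² ⟨v₀⟩² ≤ 3 max(r, ‖v₀ - w‖)² ⟨w⟩²`, raised to the power `γ/2 ∈ [-1, 0]`, gives
`max(r, ‖v₀ - w‖)^γ ≤ 3^(-γ/2) ⟨v₀⟩^γ r^γ ⟨w⟩²`, whose integral against `f` is controlled by the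
mass and the second moment.
-/

open MeasureTheory Metric

/-- The axis-parallel cube in `ℝ^d` with center `v₀` and side length `ℓ`. -/
def axisCube (d : ℕ) (v₀ : EuclideanSpace ℝ (Fin d)) (ℓ : ℝ) :
    Set (EuclideanSpace ℝ (Fin d)) :=
  {v | ∀ i, |v i - v₀ i| ≤ ℓ / 2}

open Module ENNReal

theorem setLIntegral_ball_comp_sub {E : Type*} [NormedAddCommGroup E] [MeasurableSpace E]
    [BorelSpace E] {μ : Measure E} [μ.IsAddRightInvariant] (w : E) (R : ℝ) {g : E → ℝ≥0∞}
    (hg : Measurable g) :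
    ∫⁻ v in ball w R, g (v - w) ∂μ = ∫⁻ x in ball 0 R, g x ∂μ := by
  rw [← (measurePreserving_sub_right μ w).setLIntegral_comp_preimage measurableSet_ball hg]
  congr 2
  ext v
  simp [dist_eq_norm]

theorem lintegral_closedBall_norm_sub_rpow_le_of_two_mul_lt {E : Type*} [SeminormedAddCommGroup E]
    [MeasurableSpace E] [OpensMeasurableSpace E] (μ : Measure E) {γ : ℝ} (hγ : γ ≤ 0)
    {v₀ w : E} {ρ : ℝ} (hfar : 2 * ρ < ‖v₀ - w‖) :
    ∫⁻ v in closedBall v₀ ρ, ENNReal.ofReal (‖v - w‖ ^ γ) ∂μ ≤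
      μ (closedBall v₀ ρ) * ENNReal.ofReal (2 ^ (-γ) * ‖v₀ - w‖ ^ γ) := by
  have hpt : ∀ v ∈ closedBall v₀ ρ,
      ENNReal.ofReal (‖v - w‖ ^ γ) ≤ ENNReal.ofReal (2 ^ (-γ) * ‖v₀ - w‖ ^ γ) := fun v hv => by
    rw [mem_closedBall, dist_eq_norm] at hv
    have hρ : 0 ≤ ρ := (norm_nonneg _).trans hv
    have hhalf : ‖v₀ - w‖ / 2 ≤ ‖v - w‖ := by
      linarith [norm_sub_le_norm_sub_add_norm_sub v₀ v w, norm_sub_rev v₀ v]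
    refine ENNReal.ofReal_le_ofReal ((Real.rpow_le_rpow_of_nonpos (by linarith) hhalf hγ).trans ?_)
    rw [Real.div_rpow (norm_nonneg _) zero_le_two, Real.rpow_neg zero_le_two, div_eq_inv_mul]
  calc ∫⁻ v in closedBall v₀ ρ, ENNReal.ofReal (‖v - w‖ ^ γ) ∂μ
      ≤ ∫⁻ _ in closedBall v₀ ρ, ENNReal.ofReal (2 ^ (-γ) * ‖v₀ - w‖ ^ γ) ∂μ :=
        setLIntegral_mono' measurableSet_closedBall hpt
    _ = μ (closedBall v₀ ρ) * ENNReal.ofReal (2 ^ (-γ) * ‖v₀ - w‖ ^ γ) := by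
        rw [setLIntegral_const, mul_comm]

section HaarKernel

variable {E : Type*} [NormedAddCommGroup E] [NormedSpace ℝ E] [FiniteDimensional ℝ E]
  [MeasurableSpace E] [BorelSpace E] {μ : Measure E} [μ.IsAddHaarMeasure]

theorem lintegral_ball_zero_norm_rpow (γ : ℝ) {R : ℝ} (hR : 0 < R) :
    ∫⁻ x in ball (0 : E) R, ENNReal.ofReal (‖x‖ ^ γ) ∂μ =
      ENNReal.ofReal (R ^ (finrank ℝ E + γ)) *
        ∫⁻ x in ball (0 : E) 1, ENNReal.ofReal (‖x‖ ^ γ) ∂μ := by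
  have hRd : 0 < R ^ finrank ℝ E := pow_pos hR _
  have hpre : (R • ·) ⁻¹' ball (0 : E) R = ball 0 1 := by
    ext x
    simp [norm_smul, abs_of_pos hR, hR]
  have hscale := setLIntegral_map (μ := μ) (measurableSet_ball (x := (0 : E)) (ε := R))
    (by fun_prop : Measurable fun x : E => ENNReal.ofReal (‖x‖ ^ γ)) (measurable_const_smul R)
  rw [Measure.map_addHaar_smul μ hR.ne', Measure.restrict_smul, lintegral_smul_measure, hpre,
    smul_eq_mul, abs_of_pos (inv_pos.2 hRd)] at hscale
  simp_rw [norm_smul, Real.norm_of_nonneg hR.le, Real.mul_rpow hR.le (norm_nonneg _),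
    ENNReal.ofReal_mul (Real.rpow_nonneg hR.le γ)] at hscale
  rw [lintegral_const_mul' _ _ ENNReal.ofReal_ne_top] at hscale
  rw [Real.rpow_add hR, Real.rpow_natCast, ENNReal.ofReal_mul hRd.le, mul_assoc, ← hscale,
    ← mul_assoc, ← ENNReal.ofReal_mul hRd.le, mul_inv_cancel₀ hRd.ne', ENNReal.ofReal_one,
    one_mul]

theorem lintegral_ball_zero_norm_rpow_lt_top [Nontrivial E] {γ : ℝ}
    (hγ : -(finrank ℝ E : ℝ) < γ) :
    ∫⁻ x in ball (0 : E) 1, ENNReal.ofReal (‖x‖ ^ γ) ∂μ < ∞ := by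
  refine (integrableOn_ball_of_norm_le_rpow (f := fun x : E => ‖x‖ ^ γ) (C := 1) (α := -γ)
    finrank_pos (by linarith) (Filter.Eventually.of_forall fun x => ?_)
    (measurable_norm.pow_const γ).aestronglyMeasurable).lintegral_lt_top
  rw [neg_neg, one_mul, Real.norm_of_nonneg (Real.rpow_nonneg (norm_nonneg x) γ)]

theorem lintegral_closedBall_norm_sub_rpow_le_of_le_two_mul {γ : ℝ} (hγ : γ ≤ 0)
    {v₀ w : E} {ρ : ℝ} (hρ : 0 < ρ) (hnear : ‖v₀ - w‖ ≤ 2 * ρ) :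
    ∫⁻ v in closedBall v₀ ρ, ENNReal.ofReal (‖v - w‖ ^ γ) ∂μ ≤
      μ (closedBall v₀ ρ) * ENNReal.ofReal (4 ^ finrank ℝ E * max ρ ‖v₀ - w‖ ^ γ) *
        ⨍⁻ x in ball (0 : E) 1, ENNReal.ofReal (‖x‖ ^ γ) ∂μ := by
  set d := finrank ℝ E
  have hsub : closedBall v₀ ρ ⊆ ball w (4 * ρ) := fun v hv => by
    rw [mem_closedBall, dist_eq_norm] at hv
    rw [mem_ball, dist_eq_norm]
    linarith [norm_sub_le_norm_sub_add_norm_sub v v₀ w]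
  have hpow : (4 * ρ) ^ γ ≤ max ρ ‖v₀ - w‖ ^ γ :=
    Real.rpow_le_rpow_of_nonpos (hρ.trans_le (le_max_left _ _))
      (max_le (by linarith) (by linarith)) hγ
  calc ∫⁻ v in closedBall v₀ ρ, ENNReal.ofReal (‖v - w‖ ^ γ) ∂μ
      ≤ ∫⁻ v in ball w (4 * ρ), ENNReal.ofReal (‖v - w‖ ^ γ) ∂μ := lintegral_mono_set hsub
    _ = ENNReal.ofReal (ρ ^ d) * μ (ball (0 : E) 1) * ENNReal.ofReal (4 ^ d * (4 * ρ) ^ γ) *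
          ⨍⁻ x in ball (0 : E) 1, ENNReal.ofReal (‖x‖ ^ γ) ∂μ := by
      rw [setLIntegral_ball_comp_sub w _ (by fun_prop : Measurable fun x : E =>
          ENNReal.ofReal (‖x‖ ^ γ)), lintegral_ball_zero_norm_rpow γ (by positivity),
        setLAverage_eq, Real.rpow_add (by positivity), Real.rpow_natCast, mul_pow,
        show (4 : ℝ) ^ d * ρ ^ d * (4 * ρ) ^ γ = ρ ^ d * (4 ^ d * (4 * ρ) ^ γ) by ring,
        ENNReal.ofReal_mul (by positivity)]
      conv_lhs => rw [← ENNReal.mul_div_cancel (measure_ball_pos μ (0 : E) one_pos).ne'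
        measure_ball_lt_top.ne (b := ∫⁻ x in ball (0 : E) 1, ENNReal.ofReal (‖x‖ ^ γ) ∂μ)]
      ring
    _ ≤ μ (closedBall v₀ ρ) * ENNReal.ofReal (4 ^ d * max ρ ‖v₀ - w‖ ^ γ) *
          ⨍⁻ x in ball (0 : E) 1, ENNReal.ofReal (‖x‖ ^ γ) ∂μ := by
      rw [Measure.addHaar_closedBall μ v₀ hρ.le]
      gcongr

theorem exists_lintegral_closedBall_norm_sub_rpow_le [Nontrivial E] {γ : ℝ}
    (hγ₁ : -(finrank ℝ E : ℝ) < γ) (hγ₂ : γ ≤ 0) :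
    ∃ C : ℝ, 0 < C ∧ ∀ (v₀ w : E) {ρ : ℝ}, 0 < ρ →
      ∫⁻ v in closedBall v₀ ρ, ENNReal.ofReal (‖v - w‖ ^ γ) ∂μ ≤
        μ (closedBall v₀ ρ) * ENNReal.ofReal (C * max ρ ‖v₀ - w‖ ^ γ) := by
  have hA : ⨍⁻ x in ball (0 : E) 1, ENNReal.ofReal (‖x‖ ^ γ) ∂μ ≠ ∞ := by
    rw [setLAverage_eq]
    exact ENNReal.div_ne_top (lintegral_ball_zero_norm_rpow_lt_top hγ₁).ne
      (measure_ball_pos μ 0 one_pos).ne'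
  set A := ⨍⁻ x in ball (0 : E) 1, ENNReal.ofReal (‖x‖ ^ γ) ∂μ
  refine ⟨4 ^ finrank ℝ E * A.toReal + 2 ^ (-γ), by positivity, fun v₀ w ρ hρ => ?_⟩
  have hM : 0 ≤ max ρ ‖v₀ - w‖ ^ γ := by positivity
  rcases le_or_gt ‖v₀ - w‖ (2 * ρ) with hnear | hfar
  · refine (lintegral_closedBall_norm_sub_rpow_le_of_le_two_mul hγ₂ hρ hnear).trans ?_
    rw [mul_assoc]
    gcongr
    calc ENNReal.ofReal (4 ^ finrank ℝ E * max ρ ‖v₀ - w‖ ^ γ) * A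
        = ENNReal.ofReal (4 ^ finrank ℝ E * max ρ ‖v₀ - w‖ ^ γ * A.toReal) := by
          rw [ENNReal.ofReal_mul (p := 4 ^ _ * _) (by positivity), ENNReal.ofReal_toReal hA]
      _ ≤ _ := ENNReal.ofReal_le_ofReal
          (by nlinarith [mul_nonneg (by positivity : (0 : ℝ) ≤ 2 ^ (-γ)) hM])
  · refine (lintegral_closedBall_norm_sub_rpow_le_of_two_mul_lt μ hγ₂ hfar).trans ?_
    rw [max_eq_right (by linarith)]
    gcongr
    exact le_add_of_nonneg_left (by positivity)

end HaarKernel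

theorem sq_mul_one_add_norm_sq_le {E : Type*} [SeminormedAddCommGroup E] {r : ℝ} (hr : 0 ≤ r)
    (hr₁ : r ≤ 1) (v₀ w : E) :
    r ^ 2 * (1 + ‖v₀‖ ^ 2) ≤ 3 * max r ‖v₀ - w‖ ^ 2 * (1 + ‖w‖ ^ 2) := by
  set M := max r ‖v₀ - w‖
  have hrM : r ≤ M := le_max_left _ _
  have h₁ : r * ‖v₀‖ ≤ M + M * ‖w‖ := by
    nlinarith [norm_le_norm_sub_add v₀ w, le_max_right r ‖v₀ - w‖, norm_nonneg (v₀ - w),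
      norm_nonneg w]
  have h₂ : (r * ‖v₀‖) ^ 2 ≤ (M + M * ‖w‖) ^ 2 := pow_le_pow_left₀ (by positivity) h₁ 2
  have h₃ : r ^ 2 ≤ M ^ 2 := pow_le_pow_left₀ hr hrM 2
  nlinarith [sq_nonneg (M - M * ‖w‖)]

theorem max_norm_sub_rpow_le {E : Type*} [SeminormedAddCommGroup E] {γ r : ℝ} (hγ₁ : -2 ≤ γ)
    (hγ₂ : γ ≤ 0) (hr : 0 < r) (hr₁ : r ≤ 1) (v₀ w : E) :
    max r ‖v₀ - w‖ ^ γ ≤ 3 ^ (-γ / 2) * (1 + ‖v₀‖ ^ 2) ^ (γ / 2) * r ^ γ * (1 + ‖w‖ ^ 2) := by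
  set M := max r ‖v₀ - w‖
  have hM : 0 < M := hr.trans_le (le_max_left _ _)
  have hsq : ∀ {x : ℝ}, 0 ≤ x → (x ^ 2) ^ (γ / 2) = x ^ γ := fun hx => by
    rw [← Real.rpow_natCast, ← Real.rpow_mul hx]
    ring_nf
  have hlow : r ^ 2 * (1 + ‖v₀‖ ^ 2) / (3 * (1 + ‖w‖ ^ 2)) ≤ M ^ 2 := by
    rw [div_le_iff₀ (by positivity)]
    linarith [sq_mul_one_add_norm_sq_le hr.le hr₁ v₀ w]
  calc M ^ γ = (M ^ 2) ^ (γ / 2) := (hsq hM.le).symm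
    _ ≤ (r ^ 2 * (1 + ‖v₀‖ ^ 2) / (3 * (1 + ‖w‖ ^ 2))) ^ (γ / 2) :=
        Real.rpow_le_rpow_of_nonpos (by positivity) hlow (by linarith)
    _ = 3 ^ (-γ / 2) * (1 + ‖v₀‖ ^ 2) ^ (γ / 2) * r ^ γ * (1 + ‖w‖ ^ 2) ^ (-γ / 2) := by
        rw [Real.div_rpow (by positivity) (by positivity), Real.mul_rpow (by positivity)
          (by positivity), Real.mul_rpow (by positivity) (by positivity), hsq hr.le, neg_div,
          Real.rpow_neg (by positivity), Real.rpow_neg (by positivity)]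
        ring
    _ ≤ 3 ^ (-γ / 2) * (1 + ‖v₀‖ ^ 2) ^ (γ / 2) * r ^ γ * (1 + ‖w‖ ^ 2) := by
        gcongr
        simpa using Real.rpow_le_rpow_of_exponent_le (le_add_of_nonneg_right (by positivity))
          (by linarith : -γ / 2 ≤ 1)

theorem lintegral_ofReal_mul_max_norm_sub_rpow_le {E : Type*} [NormedAddCommGroup E]
    [MeasurableSpace E] {ν : Measure E} {f : E → ℝ} (hf₀ : ∀ w, 0 ≤ f w) (hf : Integrable f ν)
    (hf₂ : Integrable (fun w => f w * ‖w‖ ^ 2) ν) {γ r : ℝ} (hγ₁ : -2 ≤ γ) (hγ₂ : γ ≤ 0)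
    (hr : 0 < r) (hr₁ : r ≤ 1) (v₀ : E) :
    ∫⁻ w, ENNReal.ofReal (f w) * ENNReal.ofReal (max r ‖v₀ - w‖ ^ γ) ∂ν ≤
      ENNReal.ofReal (3 ^ (-γ / 2) * (1 + ‖v₀‖ ^ 2) ^ (γ / 2) * r ^ γ *
        ((∫ w, f w ∂ν) + ∫ w, f w * ‖w‖ ^ 2 ∂ν)) := by
  set A := 3 ^ (-γ / 2) * (1 + ‖v₀‖ ^ 2) ^ (γ / 2) * r ^ γ
  have hint : Integrable (fun w => A * (f w + f w * ‖w‖ ^ 2)) ν := (hf.add hf₂).const_mul A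
  rw [← integral_add hf hf₂, ← integral_const_mul, ofReal_integral_eq_lintegral_ofReal hint
    (Filter.Eventually.of_forall fun w =>
    mul_nonneg (by positivity) (add_nonneg (hf₀ w) (mul_nonneg (hf₀ w) (by positivity))))]
  refine lintegral_mono fun w => ?_
  rw [← ENNReal.ofReal_mul (hf₀ w)]
  refine ENNReal.ofReal_le_ofReal ?_
  calc f w * max r ‖v₀ - w‖ ^ γ ≤ f w * (A * (1 + ‖w‖ ^ 2)) :=
        mul_le_mul_of_nonneg_left (max_norm_sub_rpow_le hγ₁ hγ₂ hr hr₁ v₀ w) (hf₀ w)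
    _ = A * (f w + f w * ‖w‖ ^ 2) := by ring

theorem setLIntegral_ofReal_integral_mul_le {α β : Type*} [MeasurableSpace α] [MeasurableSpace β]
    {μ : Measure α} {ν : Measure β} [SFinite μ] [SFinite ν] {f : β → ℝ} {k : α → β → ℝ}
    (hf₀ : ∀ w, 0 ≤ f w) (hf : AEMeasurable f ν) (hk₀ : ∀ v w, 0 ≤ k v w)
    (hk : Measurable (Function.uncurry k)) (s : Set α) :
    ∫⁻ v in s, ENNReal.ofReal (∫ w, f w * k v w ∂ν) ∂μ ≤
      ∫⁻ w, ENNReal.ofReal (f w) * ∫⁻ v in s, ENNReal.ofReal (k v w) ∂μ ∂ν := by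
  have hpt : ∀ v, ENNReal.ofReal (∫ w, f w * k v w ∂ν) ≤
      ∫⁻ w, ENNReal.ofReal (f w) * ENNReal.ofReal (k v w) ∂ν := fun v => by
    refine (Real.ofReal_le_enorm _).trans ((enorm_integral_le_lintegral_enorm _).trans_eq ?_)
    simp_rw [Real.enorm_of_nonneg (mul_nonneg (hf₀ _) (hk₀ v _)), ENNReal.ofReal_mul (hf₀ _)]
  calc ∫⁻ v in s, ENNReal.ofReal (∫ w, f w * k v w ∂ν) ∂μ
      ≤ ∫⁻ v in s, ∫⁻ w, ENNReal.ofReal (f w) * ENNReal.ofReal (k v w) ∂ν ∂μ := lintegral_mono hpt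
    _ = ∫⁻ w, ∫⁻ v in s, ENNReal.ofReal (f w) * ENNReal.ofReal (k v w) ∂μ ∂ν :=
        lintegral_lintegral_swap (hf.comp_snd.ennreal_ofReal.mul hk.ennreal_ofReal.aemeasurable)
    _ = _ := by
        congr 1 with w
        exact lintegral_const_mul' _ _ ENNReal.ofReal_ne_top

theorem setAverage_le_of_setLIntegral_le {α : Type*} [MeasurableSpace α] {μ : Measure α}
    {s : Set α} {g : α → ℝ} {B : ℝ} (hg : ∀ x, 0 ≤ g x) (hB : 0 ≤ B)
    (h : ∫⁻ x in s, ENNReal.ofReal (g x) ∂μ ≤ μ s * ENNReal.ofReal B) :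
    ⨍ x in s, g x ∂μ ≤ B := by
  rw [setAverage_eq, smul_eq_mul]
  rcases eq_or_ne (μ s) ∞ with hs | hs
  · simp [measureReal_def, hs, hB]
  have hint : ∫ x in s, g x ∂μ ≤ μ.real s * B := by
    refine (Real.le_norm_self _).trans ((norm_integral_le_lintegral_norm _).trans ?_)
    simp_rw [Real.norm_of_nonneg (hg _)]
    rw [measureReal_def, ← ENNReal.toReal_ofReal hB, ← ENNReal.toReal_mul]
    exact ENNReal.toReal_mono (ENNReal.mul_ne_top hs ENNReal.ofReal_ne_top) h
  rcases eq_or_ne (μ.real s) 0 with hs₀ | hs₀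
  · simp [hs₀, hB]
  calc (μ.real s)⁻¹ * ∫ x in s, g x ∂μ ≤ (μ.real s)⁻¹ * (μ.real s * B) := by gcongr
    _ = B := by field_simp

namespace EuclideanSpace

variable {d : ℕ}

theorem norm_le_sqrt_mul_of_forall_abs_le {x : EuclideanSpace ℝ (Fin d)} {s : ℝ} (hs : 0 ≤ s)
    (h : ∀ i, |x i| ≤ s) : ‖x‖ ≤ √d * s := by
  calc ‖x‖ ≤ √(Fintype.card (Fin d)) * ⨆ i, ‖inner ℝ (EuclideanSpace.basisFun (Fin d) ℝ i) x‖ :=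
        (EuclideanSpace.basisFun (Fin d) ℝ).norm_le_card_mul_iSup_norm_inner x
    _ ≤ √d * s := by
        rw [Fintype.card_fin]
        gcongr
        exact Real.iSup_le (fun i => by simpa [EuclideanSpace.inner_single_left] using h i) hs

end EuclideanSpace

theorem axisCube_subset_closedBall {d : ℕ} (v₀ : EuclideanSpace ℝ (Fin d)) {r : ℝ} (hr : 0 ≤ r) :
    axisCube d v₀ r ⊆ closedBall v₀ (√d * (r / 2)) := fun v hv => by
  rw [mem_closedBall, dist_eq_norm]
  exact EuclideanSpace.norm_le_sqrt_mul_of_forall_abs_le (by positivity) fun i => by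
    simpa using hv i

theorem closedBall_subset_axisCube {d : ℕ} (v₀ : EuclideanSpace ℝ (Fin d)) (r : ℝ) :
    closedBall v₀ (r / 2) ⊆ axisCube d v₀ r := fun v hv i => by
  rw [mem_closedBall, dist_eq_norm] at hv
  simpa using (PiLp.norm_apply_le (v - v₀) i).trans hv

theorem exists_lintegral_axisCube_norm_sub_rpow_le {d : ℕ} {γ : ℝ} (hγ₁ : -(d : ℝ) < γ)
    (hγ₂ : γ ≤ 0) :
    ∃ C : ℝ, 0 < C ∧ ∀ (v₀ w : EuclideanSpace ℝ (Fin d)) {r : ℝ}, 0 < r →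
      ∫⁻ v in axisCube d v₀ r, ENNReal.ofReal (‖v - w‖ ^ γ) ≤
        volume (axisCube d v₀ r) * ENNReal.ofReal (C * max r ‖v₀ - w‖ ^ γ) := by
  have : NeZero d := ⟨by rintro rfl; simp at hγ₁; linarith⟩
  obtain ⟨C, hC, hball⟩ := exists_lintegral_closedBall_norm_sub_rpow_le
    (μ := (volume : Measure (EuclideanSpace ℝ (Fin d)))) (by simpa using hγ₁) hγ₂
  have hd : 1 ≤ √(d : ℝ) := Real.one_le_sqrt.2 (by exact_mod_cast NeZero.one_le)
  refine ⟨(2 * √d) ^ d * C, by positivity, fun v₀ w r hr => ?_⟩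
  have hρ : r ≤ 2 * √d * (r / 2) := by nlinarith
  calc ∫⁻ v in axisCube d v₀ r, ENNReal.ofReal (‖v - w‖ ^ γ)
      ≤ ∫⁻ v in closedBall v₀ (2 * √d * (r / 2)), ENNReal.ofReal (‖v - w‖ ^ γ) :=
        lintegral_mono_set ((axisCube_subset_closedBall v₀ hr.le).trans
          (closedBall_subset_closedBall (by nlinarith)))
    _ ≤ volume (closedBall v₀ (2 * √d * (r / 2))) *
          ENNReal.ofReal (C * max (2 * √d * (r / 2)) ‖v₀ - w‖ ^ γ) :=
        hball v₀ w (by positivity)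
    _ ≤ ENNReal.ofReal ((2 * √d) ^ d) * volume (axisCube d v₀ r) *
          ENNReal.ofReal (C * max r ‖v₀ - w‖ ^ γ) := by
        rw [Measure.addHaar_closedBall_mul volume v₀ (by positivity) (by positivity),
          ← Measure.addHaar_closedBall_center volume v₀, finrank_euclideanSpace_fin]
        gcongr ENNReal.ofReal _ * ?_ * ENNReal.ofReal (C * ?_)
        · exact measure_mono (closedBall_subset_axisCube v₀ r)
        · exact Real.rpow_le_rpow_of_nonpos (hr.trans_le (le_max_left _ _))
            (max_le_max_right _ hρ) hγ₂
    _ = volume (axisCube d v₀ r) * ENNReal.ofReal ((2 * √d) ^ d * C * max r ‖v₀ - w‖ ^ γ) := by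
        rw [mul_assoc ((2 * √d) ^ d), ENNReal.ofReal_mul (p := (2 * √d) ^ d) (by positivity)]
        ring

/-- For `d ≥ 3`, `γ ∈ (-2,0]` and `f ≥ 0` with unit mass and second moment `d`, the
reaction coefficient `h_{f,γ} = f * ‖v‖^γ` satisfies, on every cube `Q` of side `r ≤ 1`
centered at `v₀`, the average bound `⨍_Q h_{f,γ} ≤ C ⟨v₀⟩^γ r^γ` with `C = C(d,γ)`. -/
theorem landau_h_cube_average_bound (d : ℕ) (hd : 3 ≤ d) (γ : ℝ)
    (hγ₁ : -2 < γ) (hγ₂ : γ ≤ 0) :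
    ∃ C : ℝ, 0 < C ∧
      ∀ f : EuclideanSpace ℝ (Fin d) → ℝ,
        (∀ v, 0 ≤ f v) → Integrable f → (∫ v, f v) = 1 →
        Integrable (fun v => f v * ‖v‖ ^ 2) → (∫ v, f v * ‖v‖ ^ 2) = d →
        ∀ (v₀ : EuclideanSpace ℝ (Fin d)) (r : ℝ), 0 < r → r ≤ 1 →
          (⨍ v in axisCube d v₀ r, ∫ w, f w * ‖v - w‖ ^ γ) ≤
            C * (1 + ‖v₀‖ ^ 2) ^ (γ / 2) * r ^ γ := by
  obtain ⟨C, hC, hcube⟩ := exists_lintegral_axisCube_norm_sub_rpow_le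
    (by linarith [show (3 : ℝ) ≤ d by exact_mod_cast hd]) hγ₂
  refine ⟨C * 3 ^ (-γ / 2) * (1 + d), by positivity, fun f hf₀ hf hmass hf₂ hmom v₀ r hr hr₁ => ?_⟩
  have hfm := hf.aemeasurable
  refine setAverage_le_of_setLIntegral_le
    (fun v => integral_nonneg fun w => mul_nonneg (hf₀ w) (by positivity)) (by positivity) ?_
  calc ∫⁻ v in axisCube d v₀ r, ENNReal.ofReal (∫ w, f w * ‖v - w‖ ^ γ)
      ≤ ∫⁻ w, ENNReal.ofReal (f w) * ∫⁻ v in axisCube d v₀ r, ENNReal.ofReal (‖v - w‖ ^ γ) :=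
        setLIntegral_ofReal_integral_mul_le hf₀ hfm (fun v w => by positivity)
          ((measurable_fst.sub measurable_snd).norm.pow_const γ) _
    _ ≤ ∫⁻ w, volume (axisCube d v₀ r) * ENNReal.ofReal C *
          (ENNReal.ofReal (f w) * ENNReal.ofReal (max r ‖v₀ - w‖ ^ γ)) := lintegral_mono fun w => by
        grw [hcube v₀ w hr, ENNReal.ofReal_mul hC.le]
        exact le_of_eq (by ring)
    _ = volume (axisCube d v₀ r) * ENNReal.ofReal C *
          ∫⁻ w, ENNReal.ofReal (f w) * ENNReal.ofReal (max r ‖v₀ - w‖ ^ γ) :=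
        lintegral_const_mul'' _ (by fun_prop)
    _ ≤ volume (axisCube d v₀ r) * ENNReal.ofReal C * ENNReal.ofReal (3 ^ (-γ / 2) *
          (1 + ‖v₀‖ ^ 2) ^ (γ / 2) * r ^ γ * ((∫ w, f w) + ∫ w, f w * ‖w‖ ^ 2)) := by
        gcongr
        exact lintegral_ofReal_mul_max_norm_sub_rpow_le hf₀ hf hf₂ hγ₁.le hγ₂ hr hr₁ v₀
    _ = volume (axisCube d v₀ r) *
          ENNReal.ofReal (C * 3 ^ (-γ / 2) * (1 + d) * (1 + ‖v₀‖ ^ 2) ^ (γ / 2) * r ^ γ) := by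
        rw [hmass, hmom, mul_assoc, ← ENNReal.ofReal_mul hC.le]
        ring_nf
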